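/- For all a ∈ ℂ, a ≠ 0, and n ≥ 0, the Charlier polynomials satisfy (a−n−1)·C_n(x;a) + a·(C_{n+1}(x;a) − C_n(x;a)) = a·C_{n+1}(x+1;a). -/

import Mathlib

open Finset

noncomputable def poch (a : ℂ) (k : ℕ) : ℂ := ∏ i ∈ Finset.range k, (a + i)

/-- Charlier polynomial `C_n(x;a)`. -/
noncomputable def charlier (n : ℕ) (a x : ℂ) : ℂ :=
  ∑ k ∈ Finset.range (n + 1),
    poch (-(n : ℂ)) k * poch (-x) k / (k.factorial : ℂ) * (-1 / a) ^ k

/-! Differencing the Charlier sum in `x` term by term, with the forward difference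
`(b)_{k+1} - (b-1)_{k+1} = (k+1) (b)_k` of the rising factorial at `b = -x` and
`(-(n+1))_{k+1} = -(n+1) (-n)_k`, gives `a (C_{n+1}(x) - C_{n+1}(x+1)) = (n+1) C_n(x)`;
the theorem is a rearrangement of this. -/

lemma poch_zero (b : ℂ) : poch b 0 = 1 := prod_range_zero _

lemma poch_succ_right (b : ℂ) (k : ℕ) : poch b (k + 1) = poch b k * (b + k) :=
  prod_range_succ _ _

lemma poch_succ_left (b : ℂ) (k : ℕ) : poch b (k + 1) = b * poch (b + 1) k := by
  rw [poch, prod_range_succ', poch, mul_comm]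
  push_cast
  simp only [add_zero, add_assoc, add_comm (1 : ℂ)]

lemma poch_succ_sub_poch_sub_one (b : ℂ) (k : ℕ) :
    poch b (k + 1) - poch (b - 1) (k + 1) = (k + 1) * poch b k := by
  rw [poch_succ_right, poch_succ_left (b - 1), sub_add_cancel]
  ring

lemma charlier_succ_sub_charlier_succ_add_one (a x : ℂ) (ha : a ≠ 0) (n : ℕ) :
    a * (charlier (n + 1) a x - charlier (n + 1) a (x + 1)) = (n + 1) * charlier n a x := by
  simp only [charlier, ← sum_sub_distrib, mul_sum]
  rw [sum_range_succ']
  simp only [poch_zero, sub_self, mul_zero, add_zero]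
  refine sum_congr rfl fun k _ => ?_
  have hn : poch (-((n + 1 : ℕ) : ℂ)) (k + 1) = -(n + 1) * poch (-n) k := by
    rw [poch_succ_left]; push_cast; ring_nf
  have hx : poch (-x) (k + 1) - poch (-(x + 1)) (k + 1) = (k + 1) * poch (-x) k := by
    rw [← poch_succ_sub_poch_sub_one]; ring_nf
  have ha' : a * (-1 / a) ^ (k + 1) = -(-1 / a) ^ k := by
    rw [pow_succ]; field_simp
  calc a * (poch (-((n + 1 : ℕ) : ℂ)) (k + 1) * poch (-x) (k + 1) / (k + 1).factorial
          * (-1 / a) ^ (k + 1) - poch (-((n + 1 : ℕ) : ℂ)) (k + 1) * poch (-(x + 1)) (k + 1)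
          / (k + 1).factorial * (-1 / a) ^ (k + 1))
      = poch (-((n + 1 : ℕ) : ℂ)) (k + 1) / (k + 1).factorial * (a * (-1 / a) ^ (k + 1))
          * (poch (-x) (k + 1) - poch (-(x + 1)) (k + 1)) := by ring
    _ = _ := by
      rw [hn, hx, ha', Nat.factorial_succ]
      push_cast
      field_simp

theorem charlier_forward_shift (a x : ℂ) (ha : a ≠ 0) (n : ℕ) :
    (a - n - 1) * charlier n a x + a * (charlier (n + 1) a x - charlier n a x) =
      a * charlier (n + 1) a (x + 1) := by
  linear_combination charlier_succ_sub_charlier_succ_add_one a x ha n
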